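/- With Q^rev and its medial quotient Q^rev_M as above: every element of the orbit of 0₂ in Q^rev is of the form 0₂ ▷' y₁ with y₁ in the orbit of 0₁; consequently, since the image of Q₁ in Q^rev_M is a single point, the image of the orbit of 0₂ in Q^rev_M is also a single point. -/

import Mathlib

open LaurentPolynomial

noncomputable section

/-- The Laurent polynomial ring ℤ[t,t⁻¹]. -/
abbrev Lring : Type := LaurentPolynomial ℤ

/-- The principal ideal J = (t² + t − 1). -/
def Jideal : Ideal Lring := Ideal.span {T 1 ^ 2 + T 1 - 1}

/-- N = ℤ[t,t⁻¹]/(t² + t − 1). -/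
abbrev Nring : Type := Lring ⧸ Jideal

/-- The image of t in N. -/
def tN : Nring := Ideal.Quotient.mk Jideal (T 1)


/-- The quandle carrier: disjoint union of two copies of N, indexed by Fin 2
(index 0 is Q₁, index 1 is Q₂); `(i, x)` is the element `x_i`. -/
abbrev Qc : Type := Fin 2 × Nring

/-- m₁ = 0, m₂ = 1. -/
def mC : Fin 2 → Nring := ![0, 1]

/-- The quandle operation x_i ▷ y_j = (m_j − m_i + t·x + (1−t)·y)_i. -/
def qop (p q : Qc) : Qc := (p.1, mC q.1 - mC p.1 + tN * p.2 + (1 - tN) * q.2)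

/-- The inverse translations: β_{y_j}⁻¹(x_i) = (t⁻¹·(m_i − m_j + x − (1−t)·y))_i. -/
def qinv (p q : Qc) : Qc :=
  (p.1, Ring.inverse tN * (mC p.1 - mC q.1 + p.2 - (1 - tN) * q.2))


/-- The orientation-reversal of Q on the orbit Q₂: ▷' agrees with ▷ when the
right operand lies in Q₁, and equals β⁻¹ when the right operand lies in Q₂. -/
def rop (p q : Qc) : Qc := if q.1 = 1 then qinv p q else qop p q

/-- The inverse translations of the reversed quandle. -/
def rinv (p q : Qc) : Qc := if q.1 = 1 then qop p q else qinv p q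

/-- The smallest quandle congruence on Q^rev whose quotient is medial:
the equivalence relation compatible with ▷' and its inverse, generated by
the medial law (w ▷' x) ▷' (y ▷' z) ~ (w ▷' y) ▷' (x ▷' z). -/
inductive medRel : Qc → Qc → Prop
  | refl (a : Qc) : medRel a a
  | symm {a b : Qc} : medRel a b → medRel b a
  | trans {a b c : Qc} : medRel a b → medRel b c → medRel a c
  | compat_op {a b c d : Qc} : medRel a b → medRel c d → medRel (rop a c) (rop b d)
  | compat_inv {a b c d : Qc} : medRel a b → medRel c d → medRel (rinv a c) (rinv b d)
  | medial (w x y z : Qc) :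
      medRel (rop (rop w x) (rop y z)) (rop (rop w y) (rop x z))


/-- The orbit of `x`: the smallest subset containing `x` and closed under all
translations `β_y = (· ▷ y)` and their inverses. -/
def orbit {Q : Type*} (op inv : Q → Q → Q) (x : Q) : Set Q :=
  ⋂₀ {S : Set Q | x ∈ S ∧ ∀ y z, z ∈ S → op z y ∈ S ∧ inv z y ∈ S}

/-- t² + t − 1 = 0 in N. -/
lemma tN_rel : tN ^ 2 + tN - 1 = 0 := by
  have h : (Ideal.Quotient.mk Jideal) (T 1 ^ 2 + T 1 - 1) = 0 :=
    Ideal.Quotient.eq_zero_iff_mem.mpr (Ideal.subset_span rfl)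
  rw [map_sub, map_add, map_pow, map_one] at h
  exact h

lemma tN_mul : tN * (tN + 1) = 1 := by linear_combination tN_rel

lemma tN_isUnit : IsUnit tN := IsUnit.of_mul_eq_one _ tN_mul

/-- t⁻¹ = t + 1 in N. -/
lemma tN_inverse : Ring.inverse tN = tN + 1 := by
  have h := Ring.inverse_mul_cancel_left tN (tN + 1) tN_isUnit
  calc Ring.inverse tN = Ring.inverse tN * (tN * (tN + 1)) := by rw [tN_mul, mul_one]
    _ = tN + 1 := h

lemma orbit_mem_self {Q : Type*} (op inv : Q → Q → Q) (x : Q) : x ∈ orbit op inv x :=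
  fun _ hS => hS.1

lemma orbit_op {Q : Type*} {op inv : Q → Q → Q} {x z : Q} (hz : z ∈ orbit op inv x)
    (y : Q) : op z y ∈ orbit op inv x :=
  fun S hS => (hS.2 y z (hz S hS)).1

lemma orbit_inv {Q : Type*} {op inv : Q → Q → Q} {x z : Q} (hz : z ∈ orbit op inv x)
    (y : Q) : inv z y ∈ orbit op inv x :=
  fun S hS => (hS.2 y z (hz S hS)).2

/-- Orbits stay in one component. -/
lemma orbit_fst {i : Fin 2} {x : Nring} {q : Qc}
    (hq : q ∈ orbit rop rinv (i, x)) : q.1 = i := by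
  refine hq {p : Qc | p.1 = i} ⟨rfl, ?_⟩
  intro y z hz
  constructor <;> simp [rop, rinv, qop, qinv] <;> split <;> simpa using hz

lemma rop_00 (p q : Nring) : rop ((0 : Fin 2), p) ((0 : Fin 2), q)
    = ((0 : Fin 2), tN * p + (1 - tN) * q) := by
  simp only [rop, qop, mC, Matrix.cons_val_zero, Matrix.cons_val_one, Matrix.head_cons,
    reduceIte]
  exact congrArg _ (by ring)

lemma rop_01 (p q : Nring) : rop ((0 : Fin 2), p) ((1 : Fin 2), q)
    = ((0 : Fin 2), (tN + 1) * (p - 1 - (1 - tN) * q)) := by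
  simp only [rop, qinv, mC, tN_inverse, Matrix.cons_val_zero, Matrix.cons_val_one,
    Matrix.head_cons, reduceIte]
  exact congrArg _ (by ring)

lemma rop_10 (p q : Nring) : rop ((1 : Fin 2), p) ((0 : Fin 2), q)
    = ((1 : Fin 2), tN * p + (1 - tN) * q - 1) := by
  simp only [rop, qop, mC, Matrix.cons_val_zero, Matrix.cons_val_one, Matrix.head_cons,
    reduceIte]
  exact congrArg _ (by ring)

lemma rop_11 (p q : Nring) : rop ((1 : Fin 2), p) ((1 : Fin 2), q)
    = ((1 : Fin 2), (tN + 1) * (p - (1 - tN) * q)) := by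
  simp only [rop, qinv, mC, tN_inverse, Matrix.cons_val_zero, Matrix.cons_val_one,
    Matrix.head_cons, reduceIte]
  exact congrArg _ (by ring)

lemma rinv_01 (p q : Nring) : rinv ((0 : Fin 2), p) ((1 : Fin 2), q)
    = ((0 : Fin 2), tN * p + (1 - tN) * q + 1) := by
  simp only [rinv, qop, mC, Matrix.cons_val_zero, Matrix.cons_val_one, Matrix.head_cons,
    reduceIte]
  exact congrArg _ (by ring)

/-- Every element of Q₁ is in the orbit of 0₁. -/
lemma mem_orbit_Q1 (u : Nring) :
    ((0 : Fin 2), u) ∈ orbit rop rinv ((0 : Fin 2), (0 : Nring)) := by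
  have key : rinv ((0 : Fin 2), (0 : Nring)) ((1 : Fin 2), (tN + 1) ^ 2 * (u - 1))
      = ((0 : Fin 2), u) := by
    rw [rinv_01]
    exact congrArg _ (by linear_combination (-tN * (u - 1)) * tN_rel)
  have h := orbit_inv (orbit_mem_self rop rinv ((0 : Fin 2), (0 : Nring)))
      ((1 : Fin 2), (tN + 1) ^ 2 * (u - 1))
  rwa [key] at h

/-- Every element of Q₂ expressed as 0₂ ▷' y₁. -/
lemma rop_Q1_form (x : Nring) :
    rop ((1 : Fin 2), (0 : Nring)) ((0 : Fin 2), (tN + 1) ^ 2 * (x + 1))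
      = ((1 : Fin 2), x) := by
  rw [rop_10]
  exact congrArg _ (by linear_combination (-tN * (x + 1)) * tN_rel)

/-- All of Q₁ is a single point in the medial quotient. -/
lemma medRel_Q1 (x y : Nring) : medRel ((0 : Fin 2), x) ((0 : Fin 2), y) := by
  -- use the medial law with w = (0,a), x = (1,b), y = (0,0), z = (1,0),
  -- where b = (t+1)(x−y) and a = y + (t+1) + b
  have h := medRel.medial ((0 : Fin 2), y + (tN + 1) + (tN + 1) * (x - y))
      ((1 : Fin 2), (tN + 1) * (x - y))
      ((0 : Fin 2), (0 : Nring)) ((1 : Fin 2), (0 : Nring))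
  simp only [rop_00, rop_01, rop_11] at h
  convert h using 3
  · linear_combination (-(tN^2*x) + tN^2*y - tN*x + tN*y - tN - 1 - x) * tN_rel
  · linear_combination (-(tN^2*x) + tN^2*y - 2*tN*x + 2*tN*y - tN - 1 - x) * tN_rel

/-- Every element of the orbit of 0₂ in Q^rev is 0₂ ▷' y₁ for some y₁ in the
orbit of 0₁; consequently the image of the orbit of 0₂ in the medial quotient
is a single point. -/
theorem stmt16 :
    (∀ q ∈ orbit rop rinv ((1 : Fin 2), (0 : Nring)),
      ∃ y ∈ orbit rop rinv ((0 : Fin 2), (0 : Nring)),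
        q = rop ((1 : Fin 2), (0 : Nring)) y) ∧
    (∀ q ∈ orbit rop rinv ((1 : Fin 2), (0 : Nring)),
      medRel q ((1 : Fin 2), (0 : Nring))) := by
  have part1 : ∀ q ∈ orbit rop rinv ((1 : Fin 2), (0 : Nring)),
      ∃ y ∈ orbit rop rinv ((0 : Fin 2), (0 : Nring)),
        q = rop ((1 : Fin 2), (0 : Nring)) y := by
    intro q hq
    have h1 : q.1 = 1 := orbit_fst hq
    obtain ⟨i, x⟩ := q
    subst h1
    exact ⟨((0 : Fin 2), (tN + 1) ^ 2 * (x + 1)), mem_orbit_Q1 _, (rop_Q1_form x).symm⟩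
  refine ⟨part1, ?_⟩
  intro q hq
  have h1 : q.1 = 1 := orbit_fst hq
  obtain ⟨i, x⟩ := q
  subst h1
  rw [← rop_Q1_form x]
  nth_rewrite 2 [← rop_Q1_form 0]
  exact medRel.compat_op (medRel.refl _) (medRel_Q1 _ _)
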